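/- Let H and V be real Hilbert spaces, B : V → H a bounded linear map, a(·,·) a continuous symmetric bilinear form on V given by a(u,w) = ⟨Eu, Ew⟩_W + λ⟨Bu, Bw⟩_H, where E : V → W is a bounded linear map into a Hilbert space W with ‖Eu‖ ≥ c_K‖Bu‖ for all u. If u ∈ V and q ∈ H satisfy a(u, w) = ⟨q, Bw⟩ for all w ∈ V, and additionally there exists w_q ∈ V with Bw_q = q and ‖Ew_q‖ ≤ β⁻¹‖q‖ for some β > 0, then ‖q‖² ≤ (β⁻² + λ)(‖Eu‖² + λ‖Bu‖²). -/
import Mathlib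


open RealInnerProductSpace

/-- Abstract inf-sup based energy estimate (Lemma 2 of the paper). -/
theorem infsup_energy_estimate
    {V W H : Type*}
    [NormedAddCommGroup V] [InnerProductSpace ℝ V]
    [NormedAddCommGroup W] [InnerProductSpace ℝ W]
    [NormedAddCommGroup H] [InnerProductSpace ℝ H]
    (E : V →L[ℝ] W) (B : V →L[ℝ] H)
    (lam cK β : ℝ) (hlam : 0 ≤ lam) (hcK : 0 < cK) (hβ : 0 < β)
    (hEB : ∀ u : V, cK * ‖B u‖ ≤ ‖E u‖)
    (u : V) (q : H)
    (hvar : ∀ w : V, ⟪E u, E w⟫ + lam * ⟪B u, B w⟫ = ⟪q, B w⟫)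
    (wq : V) (hwq1 : B wq = q) (hwq2 : ‖E wq‖ ≤ β⁻¹ * ‖q‖) :
    ‖q‖ ^ 2 ≤ (β⁻¹ ^ 2 + lam) * (‖E u‖ ^ 2 + lam * ‖B u‖ ^ 2) := by
  have h := hvar wq
  rw [hwq1] at h
  have hq2 : ‖q‖ ^ 2 = ⟪E u, E wq⟫ + lam * ⟪B u, q⟫ := by
    rw [h, real_inner_self_eq_norm_sq]
  have h1 : ⟪E u, E wq⟫ ≤ ‖E u‖ * (β⁻¹ * ‖q‖) :=
    (real_inner_le_norm _ _).trans
      (mul_le_mul_of_nonneg_left hwq2 (norm_nonneg _))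
  have h2 : ⟪B u, q⟫ ≤ ‖B u‖ * ‖q‖ := real_inner_le_norm _ _
  have key : ‖q‖ ^ 2 ≤ (β⁻¹ * ‖E u‖ + lam * ‖B u‖) * ‖q‖ := by
    rw [hq2]; nlinarith [mul_le_mul_of_nonneg_left h2 hlam]
  rcases eq_or_lt_of_le (norm_nonneg q) with h0 | h0
  · rw [← h0]; norm_num; positivity
  · have hqle : ‖q‖ ≤ β⁻¹ * ‖E u‖ + lam * ‖B u‖ := by
      have := key
      nlinarith
    nlinarith [mul_nonneg hlam (sq_nonneg (β⁻¹ * ‖B u‖ - ‖E u‖)),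
      norm_nonneg q, norm_nonneg (E u), norm_nonneg (B u),
      mul_nonneg (mul_nonneg hlam (norm_nonneg (B u))) (norm_nonneg (E u)),
      inv_pos.mpr hβ]
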